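/- arXiv:math/0304446 — 3 statements merged into one kernel-verified Lean document; each statement's English description precedes it below -/
import Mathlib

section
/- Let M be an ordered matroid and K = M|F a spanning restriction (F contains a base of M). Then for bases A, B of K (which are also bases of M), A ≤_K B in the external order of K if and only if A ≤_M B in the external order of M; i.e., the inclusion of bases induces an order embedding of the external order of K into that of M. -/
open Matroid Set

variable {α : Type*}

/-- A circuit: a minimal dependent subset of the ground set. -/
def mCircuit (M : Matroid α) (C : Set α) : Prop :=
  C ⊆ M.E ∧ ¬ M.Indep C ∧ ∀ D ⊂ C, M.Indep D

/-- e is active with respect to F: some circuit C ⊆ F ∪ {e} has e as its minimum. -/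
def mAct [LinearOrder α] (M : Matroid α) (F : Set α) : Set α :=
  {e | ∃ C, mCircuit M C ∧ C ⊆ F ∪ {e} ∧ e ∈ C ∧ ∀ x ∈ C, e ≤ x}

/-- The externally active elements with respect to F. -/
def mExt [LinearOrder α] (M : Matroid α) (F : Set α) : Set α :=
  mAct M F \ F

/-- Las Vergnas' external order on bases. -/
def extLE [LinearOrder α] (M : Matroid α) (A B : Set α) : Prop :=
  A ⊆ B ∪ mExt M B

/-- The lexicographically maximal base contained in a spanning set F. -/
def maxBas [LinearOrder α] (M : Matroid α) (F : Set α) : Set α :=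
  F \ mAct M F

/-!
Circuits of `M ↾ F` are the circuits of `M` inside `F`, and every circuit in `B ∪ {e}` with
`B ⊆ F`, `e ∈ F` lies inside `F`. Hence the externally active elements of `B` in `M ↾ F` are
those in `M` that lie in `F`, and intersecting with `F` is invisible to a base `A ⊆ F`.
-/

lemma mCircuit_iff_isCircuit (M : Matroid α) (C : Set α) : mCircuit M C ↔ M.IsCircuit C := by
  rw [isCircuit_iff_forall_ssubset, dep_iff, mCircuit]
  tauto

section ExternalOrder

variable [LinearOrder α] {M : Matroid α} {R A B : Set α}

lemma mAct_restrict (hR : R ⊆ M.E) (hBR : B ⊆ R) : mAct (M ↾ R) B = mAct M B ∩ R := by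
  ext e
  simp only [mAct, mCircuit_iff_isCircuit, restrict_isCircuit_iff hR, mem_ofPred_eq,
    mem_inter_iff]
  constructor
  · rintro ⟨C, ⟨hC, hCR⟩, hCB, heC, hmin⟩
    exact ⟨⟨C, hC, hCB, heC, hmin⟩, hCR heC⟩
  · rintro ⟨⟨C, hC, hCB, heC, hmin⟩, heR⟩
    exact ⟨C, ⟨hC, hCB.trans (union_subset hBR (singleton_subset_iff.2 heR))⟩, hCB, heC, hmin⟩

lemma mExt_restrict (hR : R ⊆ M.E) (hBR : B ⊆ R) : mExt (M ↾ R) B = mExt M B ∩ R := by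
  rw [mExt, mExt, mAct_restrict hR hBR, inter_sdiff_right_comm]

lemma extLE_restrict_iff (hR : R ⊆ M.E) (hAR : A ⊆ R) (hBR : B ⊆ R) :
    extLE (M ↾ R) A B ↔ extLE M A B := by
  rw [extLE, extLE, mExt_restrict hR hBR, union_inter_distrib_left, subset_inter_iff,
    and_iff_left (hAR.trans subset_union_right)]

end ExternalOrder

theorem extOrder_embedding_general [LinearOrder α] (M : Matroid α)
    (F : Set α) (hF : F ⊆ M.E) (hsp : ∃ B, M.IsBase B ∧ B ⊆ F) :
    (∀ A, (M ↾ F).IsBase A → M.IsBase A) ∧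
    (∀ A B, (M ↾ F).IsBase A → (M ↾ F).IsBase B →
      (extLE (M ↾ F) A B ↔ extLE M A B)) := by
  obtain ⟨B₀, hB₀, hB₀F⟩ := hsp
  have hFspan : M.Spanning F := hB₀.spanning.superset hB₀F hF
  exact ⟨fun A hA => (hFspan.isBase_restrict_iff.1 hA).1,
    fun A B hA hB => extLE_restrict_iff hF hA.subset_ground hB.subset_ground⟩

theorem extOrder_embedding [LinearOrder α] (M : Matroid α) [M.Finite]
    (F : Set α) (hF : F ⊆ M.E) (hsp : ∃ B, M.IsBase B ∧ B ⊆ F) :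
    (∀ A, (M ↾ F).IsBase A → M.IsBase A) ∧
    (∀ A B, (M ↾ F).IsBase A → (M ↾ F).IsBase B →
      (extLE (M ↾ F) A B ↔ extLE M A B)) :=
  extOrder_embedding_general M F hF hsp
end

section
/- Let M be an ordered matroid on E with top base T = MaxBas(E) = E \ Act_M(E). If F is a spanning subset of E and T ⊆ F, then T ∩ Act_M(F) = ∅ and hence MaxBas(F) = T. -/
open Matroid Set

variable {α : Type*}

/-!
Every element of a finite `F ⊆ E` lies in the closure of `MaxBas(F)`: an active `e ∈ F` is spanned
by the rest of its witnessing circuit, all of whose elements are larger than `e`, so descending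
induction applies. The minimum of a circuit inside `F` is active, so `MaxBas(F)` is also
independent, and `T = MaxBas(E)` is a base. For `x` active in `E`, the minimum of the fundamental
circuit of `x` in `T` is active, hence not in `T`, hence equal to `x`; as this circuit lies in
`T ∪ {x} ⊆ F ∪ {x}`, `x` is active in `F`. Thus `Act(F) = Act(E)` and `MaxBas(F) = F \ Act(E) = T`.
-/

namespace Matroid

variable {M : Matroid α} {C F G : Set α}

lemma mCircuit_iff_isCircuit : mCircuit M C ↔ M.IsCircuit C := by
  rw [isCircuit_iff_forall_ssubset, Dep, mCircuit]
  tauto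

variable [LinearOrder α]

lemma mem_mAct_iff {e : α} : e ∈ mAct M F ↔
    ∃ C, M.IsCircuit C ∧ C ⊆ F ∪ {e} ∧ e ∈ C ∧ ∀ x ∈ C, e ≤ x := by
  simp only [mAct, mem_ofPred_eq, mCircuit_iff_isCircuit]

lemma mAct_subset_ground : mAct M F ⊆ M.E := by
  rintro e ⟨C, hC, -, heC, -⟩
  exact hC.1 heC

lemma mAct_mono (hFG : F ⊆ G) : mAct M F ⊆ mAct M G := by
  intro e he
  obtain ⟨C, hC, hCF, heC, hmin⟩ := mem_mAct_iff.1 he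
  exact mem_mAct_iff.2 ⟨C, hC, hCF.trans (union_subset_union_left _ hFG), heC, hmin⟩

lemma IsCircuit.exists_mem_mAct [M.Finitary] (hC : M.IsCircuit C) (hCF : C ⊆ F) :
    ∃ e ∈ C, e ∈ mAct M F ∧ ∀ x ∈ C, e ≤ x := by
  obtain ⟨e, heC, hmin⟩ := exists_min_image C id hC.finite hC.nonempty
  exact ⟨e, heC, mem_mAct_iff.2 ⟨C, hC, hCF.trans subset_union_left, heC, hmin⟩, hmin⟩

lemma indep_maxBas [M.Finitary] (hF : F ⊆ M.E) : M.Indep (maxBas M F) := by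
  rw [maxBas, indep_iff_forall_subset_not_isCircuit (sdiff_subset.trans hF)]
  intro C hCT hC
  obtain ⟨e, heC, heAct, -⟩ := hC.exists_mem_mAct (hCT.trans sdiff_subset)
  exact (hCT heC).2 heAct

lemma subset_closure_maxBas (hF : F ⊆ M.E) (hfin : F.Finite) :
    F ⊆ M.closure (maxBas M F) := by
  intro e heF
  refine (hfin.wellFoundedOn (r := (· > ·))).induction heF fun e heF ih ↦ ?_
  by_cases heAct : e ∈ mAct M F
  · obtain ⟨C, hC, hCF, heC, hmin⟩ := mem_mAct_iff.1 heAct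
    have hCF' : C ⊆ F := by rwa [union_singleton, insert_eq_of_mem heF] at hCF
    have hrest : C \ {e} ⊆ M.closure (maxBas M F) := fun x hx ↦
      ih x (hCF' hx.1) (lt_of_le_of_ne (hmin x hx.1) (Ne.symm hx.2))
    exact M.closure_subset_closure_of_subset_closure hrest
      (hC.mem_closure_sdiff_singleton_of_mem heC)
  · exact M.mem_closure_of_mem' ⟨heF, heAct⟩ (hF heF)

lemma isBase_maxBas [M.Finitary] (hF : M.Spanning F) (hfin : F.Finite) :
    M.IsBase (maxBas M F) := by
  refine (indep_maxBas hF.subset_ground).isBase_of_ground_subset_closure ?_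
  rw [← hF.closure_eq]
  exact M.closure_subset_closure_of_subset_closure (subset_closure_maxBas hF.subset_ground hfin)

lemma mAct_ground_subset [M.Finite] (hT : maxBas M M.E ⊆ F) : mAct M M.E ⊆ mAct M F := by
  intro x hx
  have hxT : x ∉ maxBas M M.E := fun h ↦ h.2 hx
  have hxE : x ∈ M.E := mAct_subset_ground hx
  have hC := (isBase_maxBas M.ground_spanning M.ground_finite).fundCircuit_isCircuit hxE hxT
  have hCx : M.fundCircuit x (maxBas M M.E) ⊆ insert x (maxBas M M.E) :=
    M.fundCircuit_subset_insert x _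
  obtain ⟨m, hmC, hmAct, hmin⟩ := hC.exists_mem_mAct hC.subset_ground
  obtain rfl : m = x := (hCx hmC).resolve_right fun hmT ↦ hmT.2 hmAct
  refine mem_mAct_iff.2 ⟨_, hC, ?_, hmC, hmin⟩
  rw [union_singleton]
  exact hCx.trans (insert_subset_insert hT)

end Matroid

theorem maxBas_eq_top_general [LinearOrder α] (M : Matroid α) [M.Finite]
    (F : Set α) (hF : F ⊆ M.E)
    (hT : maxBas M M.E ⊆ F) :
    maxBas M M.E ∩ mAct M F = ∅ ∧ maxBas M F = maxBas M M.E := by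
  have hAct : mAct M F = mAct M M.E := (mAct_mono hF).antisymm (mAct_ground_subset hT)
  refine ⟨by rw [hAct, maxBas, sdiff_inter_self], ?_⟩
  ext x
  rw [maxBas, hAct]
  exact ⟨fun hx ↦ ⟨hF hx.1, hx.2⟩, fun hx ↦ ⟨hT hx, hx.2⟩⟩

theorem maxBas_eq_top [LinearOrder α] (M : Matroid α) [M.Finite]
    (F : Set α) (hF : F ⊆ M.E) (hsp : ∃ B, M.IsBase B ∧ B ⊆ F)
    (hT : maxBas M M.E ⊆ F) :
    maxBas M M.E ∩ mAct M F = ∅ ∧ maxBas M F = maxBas M M.E :=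
  maxBas_eq_top_general M F hF hT
end

section
/- Let E be finite with two linear orders ⊴ and ⊴', and let M, M' be the same underlying matroid ordered by ⊴ and ⊴' respectively. If Act(M) = Act(M') (active elements with respect to the full ground set E) and the two orders agree on this set, then Ext_M(B) = Ext_{M'}(B) for every base B, and consequently the identity map on bases is an isomorphism of the external lattices L(M) ≅ L(M'). -/
open Matroid Set

/-!
An element `e` that is `l`-active with respect to `F` is the `l`-minimum of a circuit `C`.
The `l'`-minimum `f` of the (finite) circuit `C` is `l'`-active with respect to `E`, hence
`l`-active; so `e` and `f` both lie in the set on which the two orders agree, which forces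
`e = f`. Thus `Act_l(F) = Act_{l'}(F)` for every `F`, and `Ext` and the external order,
being defined from `Act`, coincide as well.
-/

variable {α : Type*}

/-- Active elements with respect to F, for an explicit linear order l. -/
def mActO (l : LinearOrder α) (M : Matroid α) (F : Set α) : Set α :=
  {e | ∃ C, mCircuit M C ∧ C ⊆ F ∪ {e} ∧ e ∈ C ∧ ∀ x ∈ C, l.le e x}

/-- Externally active elements with respect to F, for the order l. -/
def mExtO (l : LinearOrder α) (M : Matroid α) (F : Set α) : Set α :=
  mActO l M F \ F

/-- Las Vergnas' external order on bases, for the order l. -/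
def extLEO (l : LinearOrder α) (M : Matroid α) (A B : Set α) : Prop :=
  A ⊆ B ∪ mExtO l M B

lemma mem_mActO_ground_of_mCircuit {l : LinearOrder α} {M : Matroid α} {C : Set α} {e : α}
    (hC : mCircuit M C) (heC : e ∈ C) (hmin : ∀ x ∈ C, l.le e x) : e ∈ mActO l M M.E :=
  ⟨C, hC, fun _ hx => Or.inl (hC.1 hx), heC, hmin⟩

lemma mActO_subset_mActO (l l' : LinearOrder α) (M : Matroid α) [M.Finite]
    (hAct : mActO l' M M.E ⊆ mActO l M M.E)
    (hord : ∀ a ∈ mActO l M M.E, ∀ b ∈ mActO l M M.E, l.le a b → l'.le a b)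
    (F : Set α) : mActO l M F ⊆ mActO l' M F := by
  rintro e ⟨C, hC, hCF, heC, hmin⟩
  obtain ⟨f, hfC, hfmin⟩ :=
    @Set.exists_min_image α α l' C id (M.ground_finite.subset hC.1) ⟨e, heC⟩
  have he : e ∈ mActO l M M.E := mem_mActO_ground_of_mCircuit hC heC hmin
  have hf : f ∈ mActO l M M.E := hAct (mem_mActO_ground_of_mCircuit hC hfC hfmin)
  have hef : e = f := l'.le_antisymm _ _ (hord e he f hf (hmin f hfC)) (hfmin e heC)
  exact ⟨C, hC, hCF, heC, hef ▸ hfmin⟩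

lemma mActO_eq_mActO (l l' : LinearOrder α) (M : Matroid α) [M.Finite]
    (hAct : mActO l M M.E = mActO l' M M.E)
    (hord : ∀ a ∈ mActO l M M.E, ∀ b ∈ mActO l M M.E, (l.le a b ↔ l'.le a b))
    (F : Set α) : mActO l M F = mActO l' M F := by
  refine (mActO_subset_mActO l l' M hAct.ge (fun a ha b hb => (hord a ha b hb).1) F).antisymm ?_
  refine mActO_subset_mActO l' l M hAct.le (fun a ha b hb => ?_) F
  rw [← hAct] at ha hb
  exact (hord a ha b hb).2

theorem extLattice_independent_of_order (l l' : LinearOrder α)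
    (M : Matroid α) [M.Finite]
    (hAct : mActO l M M.E = mActO l' M M.E)
    (hord : ∀ a ∈ mActO l M M.E, ∀ b ∈ mActO l M M.E, (l.le a b ↔ l'.le a b)) :
    (∀ B, M.IsBase B → mExtO l M B = mExtO l' M B) ∧
    (∀ A B, M.IsBase A → M.IsBase B → (extLEO l M A B ↔ extLEO l' M A B)) := by
  have hExt : ∀ F : Set α, mExtO l M F = mExtO l' M F := fun F => by
    rw [mExtO, mExtO, mActO_eq_mActO l l' M hAct hord F]
  exact ⟨fun B _ => hExt B, fun A B _ _ => by rw [extLEO, extLEO, hExt B]⟩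
end
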